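/- Let (A, p_A) be an ensemble of functions U^n → Im A satisfying the strong (α_A, β_A)-hash condition and (B, p_B) an ensemble of functions V^n → Im B satisfying the strong (α_B, β_B)-hash condition, with A and B independent. Then for every G ⊆ U^n × V^n and (u,v) ∈ U^n × V^n: P_{A,B}({(A,B) : (G \ {(u,v)}) ∩ (C_A(Au) × C_B(Bv)) ≠ ∅}) ≤ |G|α_Aα_B/(|Im A||Im B|) + (max_{v'∈G_V}|G_{U|V}(v')|)·α_A(β_B+1)/|Im A| + (max_{u'∈G_U}|G_{V|U}(u')|)·α_B(β_A+1)/|Im B| + β_A + β_B + β_Aβ_B. -/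

import Mathlib

open Finset
open scoped Classical

/-- Collision probability `p_A({A : Au = Au'})` for an ensemble of functions. -/
noncomputable def collP {𝒜 X B : Type*} [Fintype 𝒜] (p : 𝒜 → ℝ)
    (F : 𝒜 → X → B) (u u' : X) : ℝ :=
  ∑ a : 𝒜, if F a u = F a u' then p a else 0

/-- The strong (α,β)-hash condition for an ensemble of functions `X → B`. -/
noncomputable def StrongHash {𝒜 X B : Type*} [Fintype 𝒜] [Fintype X] [Fintype B]
    (p : 𝒜 → ℝ) (F : 𝒜 → X → B) (α β : ℝ) : Prop :=
  ∀ u : X,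
    ∑ u' ∈ (Finset.univ.erase u).filter
        (fun u' => α / (Fintype.card B : ℝ) < collP p F u u'),
      collP p F u u' ≤ β

/-! The proof splits the union bound `∑_{(u',v') ≠ (u,v)} P_A(u,u') P_B(v,v')` according to
whether `u'` is *heavy* (it is `u`, or it collides with `u` with probability above
`α_A / |Im A|`) and likewise for `v'`. The strong hash condition says the heavy collision
probabilities sum to at most `β + 1`; light ones are at most `α / |Im|` each. Light–light pairs
give the `|G|`-term, light–heavy pairs are counted through the fibres of `G`, and heavy–heavy
pairs other than `(u,v)` contribute at most `(β_A + 1)(β_B + 1) - 1`. -/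

section Counting

variable {ι κ : Type*}

theorem ite_exists_mem_le_sum (s : Finset ι) (P : ι → Prop) [DecidablePred P] {c : ℝ}
    (hc : 0 ≤ c) :
    (if ∃ i ∈ s, P i then c else 0) ≤ ∑ i ∈ s, if P i then c else 0 := by
  split_ifs with h
  · obtain ⟨i, hi, hPi⟩ := h
    calc c = if P i then c else 0 := (if_pos hPi).symm
      _ ≤ ∑ i ∈ s, if P i then c else 0 :=
        single_le_sum (f := fun i => if P i then c else 0)
          (fun j _ => by split_ifs <;> simp [hc]) hi
  · exact sum_nonneg fun j _ => by split_ifs <;> simp [hc]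

theorem card_filter_eq_le_sup_image [DecidableEq κ] (s : Finset ι) (f : ι → κ) (y : κ) :
    #{x ∈ s | f x = y} ≤ (s.image f).sup fun y' => #{x ∈ s | f x = y'} := by
  by_cases hy : y ∈ s.image f
  · exact le_sup (f := fun y' => #{x ∈ s | f x = y'}) hy
  · have : {x ∈ s | f x = y} = ∅ :=
      filter_eq_empty_iff.2 fun x hx hxy => hy (mem_image.2 ⟨x, hx, hxy⟩)
    simp [this]

theorem card_filter_le_sup_image_of_subset [DecidableEq κ] {E G : Finset ι} (hEG : E ⊆ G)
    (f : ι → κ) (y : κ) :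
    #{x ∈ E | f x = y} ≤ (G.image f).sup fun y' => #{x ∈ G | f x = y'} :=
  (card_le_card (filter_subset_filter _ hEG)).trans (card_filter_eq_le_sup_image G f y)

theorem sum_filter_comp_le_mul_sum [DecidableEq κ] {s : Finset ι} {t : Finset κ} {f : ι → κ}
    {g : κ → ℝ} {M : ℕ} (hg : ∀ y ∈ t, 0 ≤ g y) (hM : ∀ y ∈ t, #{x ∈ s | f x = y} ≤ M) :
    ∑ x ∈ s with f x ∈ t, g (f x) ≤ M * ∑ y ∈ t, g y := by
  rw [← sum_fiberwise_of_maps_to (fun x hx => (mem_filter.1 hx).2), mul_sum]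
  refine sum_le_sum fun y hy => ?_
  have hsub : {x ∈ {x ∈ s | f x ∈ t} | f x = y} ⊆ {x ∈ s | f x = y} := fun x hx => by
    simp only [mem_filter] at hx ⊢
    exact ⟨hx.1.1, hx.2⟩
  calc ∑ x ∈ {x ∈ s | f x ∈ t} with f x = y, g (f x)
      = #{x ∈ {x ∈ s | f x ∈ t} | f x = y} * g y := by
        rw [sum_congr rfl fun x hx => by rw [(mem_filter.1 hx).2], sum_const, nsmul_eq_mul]
    _ ≤ M * g y := by
        gcongr
        · exact hg y hy
        · exact (card_le_card hsub).trans (hM y hy)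

end Counting

section Splitting

variable {X Y : Type*} {P : X → ℝ} {Q : Y → ℝ} {S : Finset X} {T : Finset Y} {a b : ℝ}

theorem mul_le_of_le_off {p q : ℝ} (hp : 0 ≤ p) (hq : 0 ≤ q) (ha : 0 ≤ a) (hb : 0 ≤ b)
    {s t : Prop} [Decidable s] [Decidable t] (hpa : ¬s → p ≤ a) (hqb : ¬t → q ≤ b) :
    p * q ≤ a * b + a * (if t then q else 0) + b * (if s then p else 0)
      + (if s ∧ t then p * q else 0) := by
  by_cases hs : s <;> by_cases ht : t <;> simp only [hs, ht, if_true, if_false, and_true,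
    and_false, mul_zero, add_zero]
  · nlinarith [mul_nonneg ha hb, mul_nonneg ha hq, mul_nonneg hb hp]
  · nlinarith [mul_nonneg ha hb, hqb ht]
  · nlinarith [mul_nonneg ha hb, hpa hs]
  · nlinarith [hpa hs, hqb ht]

theorem sum_filter_mem_product_le [DecidableEq X] [DecidableEq Y] (hP : ∀ x, 0 ≤ P x)
    (hQ : ∀ y, 0 ≤ Q y) {x₀ : X} {y₀ : Y} (hx₀ : x₀ ∈ S) (hy₀ : y₀ ∈ T)
    {E : Finset (X × Y)} (hE : (x₀, y₀) ∉ E) :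
    ∑ w ∈ E with w.1 ∈ S ∧ w.2 ∈ T, P w.1 * Q w.2
      ≤ (∑ x ∈ S, P x) * (∑ y ∈ T, Q y) - P x₀ * Q y₀ := by
  have hsub : {w ∈ E | w.1 ∈ S ∧ w.2 ∈ T} ⊆ (S ×ˢ T).erase (x₀, y₀) := fun w hw => by
    obtain ⟨hwE, hwS, hwT⟩ := mem_filter.1 hw
    exact mem_erase.2 ⟨fun h => hE (h ▸ hwE), mem_product.2 ⟨hwS, hwT⟩⟩
  calc ∑ w ∈ E with w.1 ∈ S ∧ w.2 ∈ T, P w.1 * Q w.2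
      ≤ ∑ w ∈ (S ×ˢ T).erase (x₀, y₀), P w.1 * Q w.2 :=
        sum_le_sum_of_subset_of_nonneg hsub fun w _ _ => mul_nonneg (hP _) (hQ _)
    _ = (∑ x ∈ S, P x) * (∑ y ∈ T, Q y) - P x₀ * Q y₀ := by
        rw [sum_erase_eq_sub (mem_product.2 ⟨hx₀, hy₀⟩), sum_product, sum_mul_sum]

theorem sum_mul_le_of_le_off [DecidableEq X] [DecidableEq Y] (hP : ∀ x, 0 ≤ P x)
    (hQ : ∀ y, 0 ≤ Q y) (ha : 0 ≤ a) (hb : 0 ≤ b)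
    (hPa : ∀ x ∉ S, P x ≤ a) (hQb : ∀ y ∉ T, Q y ≤ b) {x₀ : X} {y₀ : Y} (hx₀ : x₀ ∈ S)
    (hy₀ : y₀ ∈ T) (hPx₀ : P x₀ = 1) (hQy₀ : Q y₀ = 1) {sA sB : ℝ}
    (hS : ∑ x ∈ S, P x ≤ sA) (hT : ∑ y ∈ T, Q y ≤ sB) {E : Finset (X × Y)} (hE : (x₀, y₀) ∉ E)
    {Mu Mv : ℕ} (hMu : ∀ x, #{w ∈ E | w.1 = x} ≤ Mu) (hMv : ∀ y, #{w ∈ E | w.2 = y} ≤ Mv) :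
    ∑ w ∈ E, P w.1 * Q w.2
      ≤ #E * a * b + Mv * a * sB + Mu * b * sA + (sA * sB - 1) := by
  have hsndHeavy : ∑ w ∈ E with w.2 ∈ T, Q w.2 ≤ Mv * sB :=
    (sum_filter_comp_le_mul_sum (fun y _ => hQ y) fun y _ => hMv y).trans (by gcongr)
  have hfstHeavy : ∑ w ∈ E with w.1 ∈ S, P w.1 ≤ Mu * sA :=
    (sum_filter_comp_le_mul_sum (fun x _ => hP x) fun x _ => hMu x).trans (by gcongr)
  have hbothHeavy : ∑ w ∈ E with w.1 ∈ S ∧ w.2 ∈ T, P w.1 * Q w.2 ≤ sA * sB - 1 := by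
    have hsA : 0 ≤ sA := (sum_nonneg fun x _ => hP x).trans hS
    have hprod := mul_le_mul hS hT (sum_nonneg fun y _ => hQ y) hsA
    have hsum := sum_filter_mem_product_le hP hQ hx₀ hy₀ hE
    rw [hPx₀, hQy₀, mul_one] at hsum
    linarith
  calc ∑ w ∈ E, P w.1 * Q w.2
      ≤ ∑ w ∈ E, (a * b + a * (if w.2 ∈ T then Q w.2 else 0)
          + b * (if w.1 ∈ S then P w.1 else 0)
          + (if w.1 ∈ S ∧ w.2 ∈ T then P w.1 * Q w.2 else 0)) :=
        sum_le_sum fun w _ => mul_le_of_le_off (hP _) (hQ _) ha hb (hPa _) (hQb _)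
    _ = #E * a * b + a * ∑ w ∈ E with w.2 ∈ T, Q w.2 + b * ∑ w ∈ E with w.1 ∈ S, P w.1
          + ∑ w ∈ E with w.1 ∈ S ∧ w.2 ∈ T, P w.1 * Q w.2 := by
        simp only [sum_add_distrib, ← mul_sum, sum_filter, sum_const, nsmul_eq_mul]
        ring
    _ ≤ #E * a * b + a * (Mv * sB) + b * (Mu * sA) + (sA * sB - 1) := by gcongr
    _ = #E * a * b + Mv * a * sB + Mu * b * sA + (sA * sB - 1) := by ring

end Splitting

section Ensemble

variable {𝒜 X B : Type*} [Fintype 𝒜] {p : 𝒜 → ℝ}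

theorem collP_nonneg (hp : ∀ a, 0 ≤ p a) (F : 𝒜 → X → B) (u u' : X) : 0 ≤ collP p F u u' :=
  sum_nonneg fun a _ => by split_ifs <;> simp [hp a]

theorem collP_self (hp1 : ∑ a, p a = 1) (F : 𝒜 → X → B) (u : X) : collP p F u u = 1 := by
  simp [collP, hp1]

theorem sum_ite_exists_collision_le {Y C ℬ : Type*} [Fintype ℬ] {q : ℬ → ℝ}
    (hp : ∀ a, 0 ≤ p a) (hq : ∀ b, 0 ≤ q b) (F : 𝒜 → X → B) (Gf : ℬ → Y → C)
    (E : Finset (X × Y)) (u : X) (v : Y) :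
    ∑ a : 𝒜, ∑ b : ℬ,
        (if ∃ w ∈ E, F a w.1 = F a u ∧ Gf b w.2 = Gf b v then p a * q b else 0)
      ≤ ∑ w ∈ E, collP p F u w.1 * collP q Gf v w.2 :=
  calc _ ≤ ∑ a : 𝒜, ∑ b : ℬ, ∑ w ∈ E,
          (if F a w.1 = F a u ∧ Gf b w.2 = Gf b v then p a * q b else 0) := by
        gcongr with a _ b _
        exact ite_exists_mem_le_sum E _ (mul_nonneg (hp a) (hq b))
    _ = ∑ w ∈ E, ∑ a : 𝒜, ∑ b : ℬ,
          (if F a w.1 = F a u ∧ Gf b w.2 = Gf b v then p a * q b else 0) :=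
        (sum_congr rfl fun a _ => sum_comm).trans sum_comm
    _ = ∑ w ∈ E, collP p F u w.1 * collP q Gf v w.2 := by
        simp only [← ite_zero_mul_ite_zero, ← sum_mul_sum, collP, eq_comm]

variable [Fintype X] [Fintype B]

noncomputable def heavySet (p : 𝒜 → ℝ) (F : 𝒜 → X → B) (α : ℝ) (u : X) : Finset X :=
  insert u ((univ.erase u).filter fun u' => α / (Fintype.card B : ℝ) < collP p F u u')

theorem mem_heavySet_self (F : 𝒜 → X → B) (α : ℝ) (u : X) : u ∈ heavySet p F α u :=
  mem_insert_self _ _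

theorem collP_le_of_notMem_heavySet {F : 𝒜 → X → B} {α : ℝ} {u x : X}
    (hx : x ∉ heavySet p F α u) : collP p F u x ≤ α / Fintype.card B := by
  simp only [heavySet, mem_insert, mem_filter, mem_erase, mem_univ, and_true, not_or, not_and,
    not_lt] at hx
  exact hx.2 hx.1

theorem StrongHash.sum_heavySet_le {F : 𝒜 → X → B} {α β : ℝ} (h : StrongHash p F α β)
    (hp1 : ∑ a, p a = 1) (u : X) : ∑ x ∈ heavySet p F α u, collP p F u x ≤ β + 1 := by
  rw [heavySet, sum_insert (fun hu => (mem_erase.1 (mem_filter.1 hu).1).1 rfl),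
    collP_self hp1, add_comm]
  exact add_le_add_left (h u) 1

end Ensemble

theorem stmt4_general {U V BA BB 𝒜 ℬ : Type*} [Fintype U] [Fintype V] [Fintype BA] [Fintype BB]
    [Fintype 𝒜] [Fintype ℬ] (n : ℕ)
    (p : 𝒜 → ℝ) (hp : ∀ a, 0 ≤ p a) (hp1 : ∑ a : 𝒜, p a = 1)
    (q : ℬ → ℝ) (hq : ∀ b, 0 ≤ q b) (hq1 : ∑ b : ℬ, q b = 1)
    (F : 𝒜 → (Fin n → U) → BA) (Gf : ℬ → (Fin n → V) → BB)
    (αA βA αB βB : ℝ) (hαA : 0 ≤ αA) (hαB : 0 ≤ αB)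
    (hA : StrongHash p F αA βA) (hB : StrongHash q Gf αB βB)
    (G : Finset ((Fin n → U) × (Fin n → V))) (u : Fin n → U) (v : Fin n → V) :
    ∑ a : 𝒜, ∑ b : ℬ,
        (if ∃ w ∈ G.erase (u, v), F a w.1 = F a u ∧ Gf b w.2 = Gf b v
          then p a * q b else 0) ≤
      (G.card : ℝ) * αA * αB / ((Fintype.card BA : ℝ) * (Fintype.card BB : ℝ))
        + (((G.image Prod.snd).sup fun v' => (G.filter fun w => w.2 = v').card : ℕ) : ℝ)
            * αA * (βB + 1) / (Fintype.card BA : ℝ)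
        + (((G.image Prod.fst).sup fun u' => (G.filter fun w => w.1 = u').card : ℕ) : ℝ)
            * αB * (βA + 1) / (Fintype.card BB : ℝ)
        + βA + βB + βA * βB := by
  have hsplit := sum_mul_le_of_le_off (collP_nonneg hp F u) (collP_nonneg hq Gf v)
    (by positivity : 0 ≤ αA / (Fintype.card BA : ℝ))
    (by positivity : 0 ≤ αB / (Fintype.card BB : ℝ))
    (fun _ => collP_le_of_notMem_heavySet) (fun _ => collP_le_of_notMem_heavySet)
    (mem_heavySet_self F αA u) (mem_heavySet_self Gf αB v) (collP_self hp1 F u)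
    (collP_self hq1 Gf v) (hA.sum_heavySet_le hp1 u) (hB.sum_heavySet_le hq1 v)
    (notMem_erase (u, v) G) (card_filter_le_sup_image_of_subset (erase_subset _ _) Prod.fst)
    (card_filter_le_sup_image_of_subset (erase_subset _ _) Prod.snd)
  have hrhs : ∀ N Mv Mu : ℝ, N * αA * αB / (Fintype.card BA * Fintype.card BB)
      + Mv * αA * (βB + 1) / Fintype.card BA + Mu * αB * (βA + 1) / Fintype.card BB
      + βA + βB + βA * βB
      = N * (αA / Fintype.card BA) * (αB / Fintype.card BB)
        + Mv * (αA / Fintype.card BA) * (βB + 1) + Mu * (αB / Fintype.card BB) * (βA + 1)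
        + ((βA + 1) * (βB + 1) - 1) := by
    intros; ring
  calc _ ≤ _ := sum_ite_exists_collision_le hp hq F Gf (G.erase (u, v)) u v
    _ ≤ _ := hsplit
    _ ≤ _ := by
        rw [hrhs]
        gcongr
        exact erase_subset _ _

/-- Collision-resistance property for two independent ensembles with different domains. -/
theorem stmt4 {U V BA BB 𝒜 ℬ : Type*} [Fintype U] [Fintype V] [Fintype BA] [Fintype BB]
    [Fintype 𝒜] [Fintype ℬ] (n : ℕ)
    (p : 𝒜 → ℝ) (hp : ∀ a, 0 ≤ p a) (hp1 : ∑ a : 𝒜, p a = 1)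
    (q : ℬ → ℝ) (hq : ∀ b, 0 ≤ q b) (hq1 : ∑ b : ℬ, q b = 1)
    (F : 𝒜 → (Fin n → U) → BA) (Gf : ℬ → (Fin n → V) → BB)
    (αA βA αB βB : ℝ) (hαA : 0 ≤ αA) (hβA : 0 ≤ βA) (hαB : 0 ≤ αB) (hβB : 0 ≤ βB)
    (hA : StrongHash p F αA βA) (hB : StrongHash q Gf αB βB)
    (G : Finset ((Fin n → U) × (Fin n → V))) (u : Fin n → U) (v : Fin n → V) :
    ∑ a : 𝒜, ∑ b : ℬ,
        (if ∃ w ∈ G.erase (u, v), F a w.1 = F a u ∧ Gf b w.2 = Gf b v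
          then p a * q b else 0) ≤
      (G.card : ℝ) * αA * αB / ((Fintype.card BA : ℝ) * (Fintype.card BB : ℝ))
        + (((G.image Prod.snd).sup fun v' => (G.filter fun w => w.2 = v').card : ℕ) : ℝ)
            * αA * (βB + 1) / (Fintype.card BA : ℝ)
        + (((G.image Prod.fst).sup fun u' => (G.filter fun w => w.1 = u').card : ℕ) : ℝ)
            * αB * (βA + 1) / (Fintype.card BB : ℝ)
        + βA + βB + βA * βB :=
  stmt4_general n p hp hp1 q hq hq1 F Gf αA βA αB βB hαA hαB hA hB G u v
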